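/- Let K be a field of characteristic zero. Define P1 = (x^3 + 2y^2 z − 4x z^2)a + (−2x y z)b + (5x^3 − x y^2 + 8x^2 z)c, P2 = (3x^2 y + 10x y z + 4y z^2)a + (−2x^3 − 10x^2 z − 8x z^2)b + (5x^2 y − y^3 + 8x y z)c, P3 = (3x^2 z + 10x z^2 + 4z^3)a + (−2y z^2)b + (−2x^3 − 5x^2 z + y^2 z)c. Then for all x, y, z, a, b, c ∈ K with y^2 z = x^3 + 5x^2 z + 4x z^2, one has P1·y = P2·x, P1·z = P3·x, and P2·z = P3·y. (Equivalently, the fiberwise cubic involution ψ fixes the cubic curve T pointwise in every fiber.) -/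
import Mathlib


namespace Stmt9

/-- First component of the fiberwise cubic involution `ψ`. -/
def P1 {K : Type*} [Field K] (x y z a b c : K) : K :=
  (x ^ 3 + 2 * y ^ 2 * z - 4 * x * z ^ 2) * a + (-2 * x * y * z) * b +
    (5 * x ^ 3 - x * y ^ 2 + 8 * x ^ 2 * z) * c

/-- Second component of the fiberwise cubic involution `ψ`. -/
def P2 {K : Type*} [Field K] (x y z a b c : K) : K :=
  (3 * x ^ 2 * y + 10 * x * y * z + 4 * y * z ^ 2) * a +
    (-2 * x ^ 3 - 10 * x ^ 2 * z - 8 * x * z ^ 2) * b +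
    (5 * x ^ 2 * y - y ^ 3 + 8 * x * y * z) * c

/-- Third component of the fiberwise cubic involution `ψ`. -/
def P3 {K : Type*} [Field K] (x y z a b c : K) : K :=
  (3 * x ^ 2 * z + 10 * x * z ^ 2 + 4 * z ^ 3) * a + (-2 * y * z ^ 2) * b +
    (-2 * x ^ 3 - 5 * x ^ 2 * z + y ^ 2 * z) * c

/-- The fiberwise cubic involution `ψ` fixes the cubic curve `T : y²z = x³ + 5x²z + 4xz²`
pointwise in every fiber: on the cubic, `(P1, P2, P3)` is projectively proportional
to `(x, y, z)`. -/
theorem psi_fixes_cubic_fiberwise {K : Type*} [Field K] [CharZero K] (x y z a b c : K)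
    (hT : y ^ 2 * z = x ^ 3 + 5 * x ^ 2 * z + 4 * x * z ^ 2) :
    P1 x y z a b c * y = P2 x y z a b c * x ∧
    P1 x y z a b c * z = P3 x y z a b c * x ∧
    P2 x y z a b c * z = P3 x y z a b c * y := by
  refine ⟨?_, ?_, ?_⟩ <;> simp only [P1, P2, P3]
  · linear_combination (2 * a * y - 2 * b * x) * hT
  · linear_combination (2 * a * z - 2 * c * x) * hT
  · linear_combination (2 * b * z - 2 * c * y) * hT

end Stmt9
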